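/- arXiv:1904.00658 — 9 statements merged into one kernel-verified Lean document; each statement's English description precedes it below -/
import Mathlib

section
/- The number of Tamari diagrams of size n equals the Catalan number C_n = (1/(n+1)) binomial(2n, n). -/
/-- A Tamari diagram of size `n` (0-indexed: entry `i` corresponds to letter `i+1`). -/
def IsTD {n : ℕ} (u : Fin n → ℕ) : Prop :=
  (∀ i : Fin n, u i ≤ n - (i.val + 1)) ∧
  (∀ i j : Fin n, i.val ≤ j.val → j.val - i.val ≤ u i → u j ≤ u i - (j.val - i.val))

/-- A dual Tamari diagram of size `n`. -/
def IsDTD {n : ℕ} (v : Fin n → ℕ) : Prop :=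
  (∀ i : Fin n, v i ≤ i.val) ∧
  (∀ i j : Fin n, j.val ≤ i.val → i.val - j.val ≤ v i → v j ≤ v i - (i.val - j.val))

/-- Compatibility of a Tamari diagram and a dual Tamari diagram. -/
def Compatible {n : ℕ} (u v : Fin n → ℕ) : Prop :=
  ∀ i j : Fin n, i < j → j.val - i.val ≤ u i → v j < j.val - i.val

/-- Tamari interval diagram. -/
def IsTID {n : ℕ} (u v : Fin n → ℕ) : Prop := IsTD u ∧ IsDTD v ∧ Compatible u v

/-- The Tamari diagram associated with a tuple `c` (u_i = max(c_i,0), u_n = 0). -/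
def ccU (n : ℕ) (c : Fin (n - 1) → ℤ) : Fin n → ℕ :=
  fun i => if h : i.val < n - 1 then (c ⟨i.val, h⟩).toNat else 0

/-- The dual Tamari diagram associated with a tuple `c` (v_1 = 0, v_{i+1} = |min(c_i,0)|). -/
def ccV (n : ℕ) (c : Fin (n - 1) → ℤ) : Fin n → ℕ :=
  fun i => if h : 0 < i.val then
    (-(c ⟨i.val - 1, by have := i.isLt; omega⟩)).toNat else 0

/-- Cubic coordinate of size `n`: a tuple of `n-1` integers whose associated pair of words
is a Tamari interval diagram. -/
def IsCC (n : ℕ) (c : Fin (n - 1) → ℤ) : Prop := IsTID (ccU n c) (ccV n c)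

/-- The relation `◁` induced by a Tamari interval diagram: `tidRel u v a b` means `x_a ◁ x_b`. -/
def tidRel {n : ℕ} (u v : Fin n → ℕ) (a b : Fin n) : Prop :=
  (b.val ≤ a.val ∧ a.val - b.val ≤ u b) ∨ (a.val ≤ b.val ∧ b.val - a.val ≤ v b)

namespace TDaux

abbrev TDt (n : ℕ) := {u : Fin n → ℕ // IsTD u}

instance finTD (n : ℕ) : Finite (TDt n) := by
  have hb : ∀ u : TDt n, ∀ i : Fin n, u.val i < n + 1 := by
    intro u i; have := u.2.1 i; omega
  exact Finite.of_injective
    (fun u : TDt n => fun i => (⟨u.val i, hb u i⟩ : Fin (n + 1)))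
    (by intro a b h; apply Subtype.ext; funext i
        have := congrFun h i; simpa [Fin.ext_iff] using this)

def glue (n : ℕ) (k : Fin (n + 1)) (a : TDt k.val) (b : TDt (n - k.val)) : Fin (n + 1) → ℕ :=
  fun i => if h0 : i.val = 0 then k.val
    else if hm : i.val ≤ k.val then a.val ⟨i.val - 1, by omega⟩
    else b.val ⟨i.val - k.val - 1, by have := i.isLt; omega⟩

lemma glue_zero {n : ℕ} (k : Fin (n + 1)) (a : TDt k.val) (b : TDt (n - k.val))
    (i : Fin (n + 1)) (hi : i.val = 0) : glue n k a b i = k.val := by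
  unfold glue; rw [dif_pos hi]

lemma glue_mid {n : ℕ} (k : Fin (n + 1)) (a : TDt k.val) (b : TDt (n - k.val))
    (i : Fin (n + 1)) (h1 : 0 < i.val) (h2 : i.val ≤ k.val) :
    glue n k a b i = a.val ⟨i.val - 1, by omega⟩ := by
  unfold glue; rw [dif_neg (by omega), dif_pos h2]

lemma glue_tail {n : ℕ} (k : Fin (n + 1)) (a : TDt k.val) (b : TDt (n - k.val))
    (i : Fin (n + 1)) (h1 : k.val < i.val) :
    glue n k a b i = b.val ⟨i.val - k.val - 1, by have := i.isLt; omega⟩ := by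
  unfold glue; rw [dif_neg (by omega), dif_neg (by omega)]

lemma glue_td (n : ℕ) (k : Fin (n + 1)) (a : TDt k.val) (b : TDt (n - k.val)) :
    IsTD (glue n k a b) := by
  have hk : k.val ≤ n := by omega
  constructor
  · intro i
    by_cases h0 : i.val = 0
    · rw [glue_zero k a b i h0]; omega
    · by_cases hm : i.val ≤ k.val
      · rw [glue_mid k a b i (by omega) hm]
        have := a.2.1 ⟨i.val - 1, by omega⟩
        simp only [Fin.val_mk] at this; omega
      · rw [glue_tail k a b i (by omega)]
        have hi := i.isLt
        have := b.2.1 ⟨i.val - k.val - 1, by omega⟩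
        simp only [Fin.val_mk] at this; omega
  · intro i j hij hle
    have hi := i.isLt; have hj := j.isLt
    by_cases h0 : i.val = 0
    · rw [glue_zero k a b i h0] at hle
      by_cases hj0 : j.val = 0
      · rw [glue_zero k a b i h0, glue_zero k a b j hj0]; omega
      · have hjk : j.val ≤ k.val := by omega
        rw [glue_zero k a b i h0, glue_mid k a b j (by omega) hjk]
        have := a.2.1 ⟨j.val - 1, by omega⟩
        simp only [Fin.val_mk] at this; omega
    · by_cases him : i.val ≤ k.val
      · rw [glue_mid k a b i (by omega) him] at hle
        have hai := a.2.1 ⟨i.val - 1, by omega⟩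
        simp only [Fin.val_mk] at hai
        have hjk : j.val ≤ k.val := by omega
        have hj0 : 0 < j.val := by omega
        rw [glue_mid k a b i (by omega) him, glue_mid k a b j hj0 hjk]
        have hp := a.2.2 ⟨i.val - 1, by omega⟩ ⟨j.val - 1, by omega⟩
          (by simp only [Fin.val_mk]; omega) (by simp only [Fin.val_mk]; omega)
        simp only [Fin.val_mk] at hp; omega
      · rw [glue_tail k a b i (by omega)] at hle
        rw [glue_tail k a b i (by omega), glue_tail k a b j (by omega)]
        have hp := b.2.2 ⟨i.val - k.val - 1, by omega⟩ ⟨j.val - k.val - 1, by omega⟩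
          (by simp only [Fin.val_mk]; omega) (by simp only [Fin.val_mk]; omega)
        simp only [Fin.val_mk] at hp; omega

lemma mid_td (n K : ℕ) (u : Fin (n + 1) → ℕ) (hu : IsTD u)
    (hK : u ⟨0, Nat.succ_pos n⟩ = K) (hKn : K ≤ n) :
    IsTD (fun t : Fin K => u ⟨t.val + 1, by have := t.isLt; omega⟩) := by
  constructor
  · intro t
    have ht := t.isLt
    have := hu.2 ⟨0, Nat.succ_pos n⟩ ⟨t.val + 1, by omega⟩
      (by simp only [Fin.val_mk]; omega) (by simp only [Fin.val_mk]; omega)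
    simp only [Fin.val_mk, hK] at this ⊢; omega
  · intro t s hts hle
    have ht := t.isLt; have hs := s.isLt
    simp only [Fin.val_mk] at hle ⊢
    have := hu.2 ⟨t.val + 1, by omega⟩ ⟨s.val + 1, by omega⟩
      (by simp only [Fin.val_mk]; omega) (by simp only [Fin.val_mk]; omega)
    simp only [Fin.val_mk] at this; omega

lemma tail_td (n K : ℕ) (u : Fin (n + 1) → ℕ) (hu : IsTD u) (hKn : K ≤ n) :
    IsTD (fun t : Fin (n - K) => u ⟨K + 1 + t.val, by have := t.isLt; omega⟩) := by
  constructor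
  · intro t
    have ht := t.isLt
    have := hu.1 ⟨K + 1 + t.val, by omega⟩
    simp only [Fin.val_mk] at this ⊢; omega
  · intro t s hts hle
    have ht := t.isLt; have hs := s.isLt
    simp only [Fin.val_mk] at hle ⊢
    have := hu.2 ⟨K + 1 + t.val, by omega⟩ ⟨K + 1 + s.val, by omega⟩
      (by simp only [Fin.val_mk]; omega) (by simp only [Fin.val_mk]; omega)
    simp only [Fin.val_mk] at this; omega

def splitEquiv (n : ℕ) : TDt (n + 1) ≃ Σ k : Fin (n + 1), TDt k.val × TDt (n - k.val) where
  toFun u :=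
    ⟨⟨u.val ⟨0, Nat.succ_pos n⟩, by have := u.2.1 ⟨0, Nat.succ_pos n⟩; omega⟩,
      ((⟨_, mid_td n (u.val ⟨0, Nat.succ_pos n⟩) u.val u.2 rfl
          (by have := u.2.1 ⟨0, Nat.succ_pos n⟩; omega)⟩ : TDt (u.val ⟨0, Nat.succ_pos n⟩)),
       (⟨_, tail_td n (u.val ⟨0, Nat.succ_pos n⟩) u.val u.2
          (by have := u.2.1 ⟨0, Nat.succ_pos n⟩; omega)⟩ : TDt (n - u.val ⟨0, Nat.succ_pos n⟩)))⟩
  invFun x := ⟨glue n x.1 x.2.1 x.2.2, glue_td n x.1 x.2.1 x.2.2⟩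
  left_inv u := by
    apply Subtype.ext
    funext i
    show glue n _ _ _ i = u.val i
    by_cases h0 : i.val = 0
    · rw [glue_zero _ _ _ i h0]
      simp only [Fin.val_mk]
      exact congrArg u.val (Fin.eq_of_val_eq (by simp only [Fin.val_mk]; omega))
    · by_cases hm : i.val ≤ u.val ⟨0, Nat.succ_pos n⟩
      · rw [glue_mid _ _ _ i (by omega) (by simp only [Fin.val_mk]; omega)]
        dsimp only
        exact congrArg u.val (Fin.eq_of_val_eq (by simp only [Fin.val_mk]; omega))
      · have hk : u.val ⟨0, Nat.succ_pos n⟩ < i.val := not_le.mp hm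
        rw [glue_tail _ _ _ i (by simp only [Fin.val_mk]; omega)]
        dsimp only
        exact congrArg u.val (Fin.eq_of_val_eq (by simp only [Fin.val_mk]; omega))
  right_inv x := by
    rcases x with ⟨k, a, b⟩
    have hfst : glue n k a b ⟨0, Nat.succ_pos n⟩ = k.val :=
      glue_zero k a b _ rfl
    refine Sigma.ext (Fin.eq_of_val_eq (by simp only [Fin.val_mk]; omega)) (heq_of_eq ?_)
    refine Prod.ext (Subtype.ext ?_) (Subtype.ext ?_)
    · funext t
      have ht : t.val < k.val := by
        have h := t.2
        simp only [Fin.val_mk, hfst] at h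
        exact h
      dsimp only
      rw [glue_mid k a b _ (by simp only [Fin.val_mk]; omega)
        (by simp only [Fin.val_mk]; omega)]
      exact congrArg a.val (Fin.eq_of_val_eq (by simp only [Fin.val_mk]; omega))
    · funext t
      have ht : t.val < n - k.val := by
        have h := t.2
        simp only [Fin.val_mk, hfst] at h
        exact h
      dsimp only
      rw [glue_tail k a b _ (by simp only [Fin.val_mk, hfst]; omega)]
      exact congrArg b.val (Fin.eq_of_val_eq (by simp only [Fin.val_mk, hfst]; omega))

lemma card_zero : Nat.card (TDt 0) = 1 := by
  haveI : Unique (TDt 0) :=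
    { default := ⟨fun i => i.elim0, ⟨fun i => i.elim0, fun i => i.elim0⟩⟩
      uniq := fun u => Subtype.ext (funext fun i => i.elim0) }
  exact Nat.card_unique

lemma card_succ (n : ℕ) :
    Nat.card (TDt (n + 1)) =
      ∑ i : Fin (n + 1), Nat.card (TDt i.val) * Nat.card (TDt (n - i.val)) := by
  classical
  haveI I1 : ∀ k : Fin (n + 1), Fintype (TDt k.val) := fun k => Fintype.ofFinite _
  haveI I2 : ∀ k : Fin (n + 1), Fintype (TDt (n - k.val)) := fun k => Fintype.ofFinite _
  rw [Nat.card_congr (splitEquiv n), Nat.card_eq_fintype_card, Fintype.card_sigma]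
  refine Finset.sum_congr rfl fun i _ => ?_
  rw [Fintype.card_prod, Nat.card_eq_fintype_card, Nat.card_eq_fintype_card]

lemma card_eq_catalan (n : ℕ) : Nat.card (TDt n) = catalan n := by
  induction n using Nat.strong_induction_on with
  | _ n ih =>
    match n with
    | 0 => exact card_zero.trans catalan_zero.symm
    | Nat.succ m =>
      rw [card_succ, catalan_succ]
      refine Finset.sum_congr rfl fun i _ => ?_
      rw [ih i.val (by omega), ih (m - i.val) (by omega)]

end TDaux

/-- The number of Tamari diagrams of size `n` is the Catalan number
`C_n = (1/(n+1)) * binomial(2n, n)`. -/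
theorem stmt3 (n : ℕ) :
    Nat.card {u : Fin n → ℕ // IsTD u} = (2 * n).choose n / (n + 1) := by
  have := TDaux.card_eq_catalan n
  rw [catalan_eq_centralBinom_div] at this
  simpa [Nat.centralBinom] using this
end

section
/- Let (u,v) be a Tamari interval diagram of size n and define a binary relation ◁ on {x_1, …, x_n} by: x_{i+l} ◁ x_i for all i ∈ [n] and 0 ≤ l ≤ u_i, and x_{i−k} ◁ x_i for all i ∈ [n] and 0 ≤ k ≤ v_i. Then ◁ is a partial order (reflexive, transitive, and antisymmetric). -/
/-- The relation induced by a Tamari interval diagram is a partial order. -/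
theorem stmt5 {n : ℕ} (u v : Fin n → ℕ) (h : IsTID u v) :
    (∀ a : Fin n, tidRel u v a a) ∧
    (∀ a b c : Fin n, tidRel u v a b → tidRel u v b c → tidRel u v a c) ∧
    (∀ a b : Fin n, tidRel u v a b → tidRel u v b a → a = b) := by
  obtain ⟨⟨hu1, hu2⟩, ⟨hv1, hv2⟩, hc⟩ := h
  refine ⟨fun a => Or.inl ⟨le_refl _, by omega⟩, ?_, ?_⟩
  · intro a b c hab hbc
    rcases hab with ⟨h1, h2⟩ | ⟨h1, h2⟩ <;> rcases hbc with ⟨h3, h4⟩ | ⟨h3, h4⟩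
    · -- LL
      have := hu2 c b h3 h4
      exact Or.inl ⟨by omega, by omega⟩
    · -- LR : b ≤ a, a-b ≤ u b ; b ≤ c, c-b ≤ v c
      by_cases hac : a.val ≤ c.val
      · exact Or.inr ⟨hac, by omega⟩
      · by_cases hbc' : b.val < c.val
        · have := hc b c hbc' (by omega)
          omega
        · have hbc2 : b = c := Fin.ext (by omega)
          exact Or.inl ⟨by omega, by rw [← hbc2]; omega⟩
    · -- RL : a ≤ b, b-a ≤ v b ; c ≤ b, b-c ≤ u c
      by_cases hca : c.val ≤ a.val
      · exact Or.inl ⟨hca, by omega⟩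
      · by_cases hcb : c.val < b.val
        · have := hc c b hcb h4
          omega
        · have hbc2 : b = c := Fin.ext (by omega)
          exact Or.inr ⟨by omega, by rw [← hbc2]; omega⟩
    · -- RR
      have := hv2 c b h3 h4
      exact Or.inr ⟨by omega, by omega⟩
  · intro a b hab hba
    rcases hab with ⟨h1, h2⟩ | ⟨h1, h2⟩ <;> rcases hba with ⟨h3, h4⟩ | ⟨h3, h4⟩
    · exact Fin.ext (by omega)
    · by_cases hba' : b.val < a.val
      · have := hc b a hba' h2
        omega
      · exact Fin.ext (by omega)
    · by_cases hab' : a.val < b.val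
      · have := hc a b hab' h4
        omega
      · exact Fin.ext (by omega)
    · exact Fin.ext (by omega)
end

section
/- Let (u,v) be a Tamari interval diagram of size n and ◁ the induced partial order on {x_1,…,x_n}. Then ◁ satisfies the interval-poset properties: for all i < j < k, x_k ◁ x_i implies x_j ◁ x_i, and x_i ◁ x_k implies x_j ◁ x_k. -/
/-- The relation induced by a Tamari interval diagram satisfies the interval-poset
properties. -/
theorem stmt6 {n : ℕ} (u v : Fin n → ℕ) (h : IsTID u v) :
    ∀ i j k : Fin n, i < j → j < k →
      (tidRel u v k i → tidRel u v j i) ∧ (tidRel u v i k → tidRel u v j k) := by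
  intro i j k hij hjk
  simp only [tidRel, Fin.lt_def] at *
  omega
end

section
/- If c is a cubic coordinate of size n and c_i ≠ 0 for some i ∈ [n-1], then the tuple c' obtained from c by setting c'_i = 0 and c'_j = c_j for j ≠ i is also a cubic coordinate. -/
lemma td_zero {n : ℕ} {u u' : Fin n → ℕ} (hu : IsTD u)
    (h : ∀ k, u' k = u k ∨ u' k = 0) : IsTD u' := by
  obtain ⟨h1, h2⟩ := hu
  constructor
  · intro k
    rcases h k with hk | hk
    · rw [hk]; exact h1 k
    · rw [hk]; exact Nat.zero_le _
  · intro a b hab hle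
    rcases h a with ha | ha
    · rcases h b with hb | hb
      · rw [ha, hb]; rw [ha] at hle; exact h2 a b hab hle
      · rw [hb]; exact Nat.zero_le _
    · rw [ha] at hle ⊢
      have : a = b := Fin.ext (by omega)
      subst this
      rcases h a with ha' | ha' <;> omega

lemma dtd_zero {n : ℕ} {v v' : Fin n → ℕ} (hv : IsDTD v)
    (h : ∀ k, v' k = v k ∨ v' k = 0) : IsDTD v' := by
  obtain ⟨h1, h2⟩ := hv
  constructor
  · intro k
    rcases h k with hk | hk
    · rw [hk]; exact h1 k
    · rw [hk]; exact Nat.zero_le _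
  · intro a b hab hle
    rcases h a with ha | ha
    · rcases h b with hb | hb
      · rw [ha, hb]; rw [ha] at hle; exact h2 a b hab hle
      · rw [hb]; exact Nat.zero_le _
    · rw [ha] at hle ⊢
      have : a = b := Fin.ext (by omega)
      subst this
      rcases h a with ha' | ha' <;> omega

lemma compat_zero {n : ℕ} {u v u' v' : Fin n → ℕ} (hc : Compatible u v)
    (hu : ∀ k, u' k = u k ∨ u' k = 0) (hv : ∀ k, v' k = v k ∨ v' k = 0) :
    Compatible u' v' := by
  intro a b hab hle
  rcases hu a with ha | ha
  · have := hc a b hab (ha ▸ hle)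
    rcases hv b with hb | hb
    · rw [hb]; exact this
    · rw [hb]; exact Fin.lt_iff_val_lt_val.mp hab |> fun h => by omega
  · rw [ha] at hle
    have := Fin.lt_iff_val_lt_val.mp hab
    omega

/-- Setting any nonzero component of a cubic coordinate to `0` yields a cubic coordinate. -/
theorem stmt9 {n : ℕ} (c : Fin (n - 1) → ℤ) (h : IsCC n c) (i : Fin (n - 1))
    (hi : c i ≠ 0) : IsCC n (Function.update c i 0) := by
  obtain ⟨hu, hv, hcomp⟩ := h
  have hU : ∀ k, ccU n (Function.update c i 0) k = ccU n c k ∨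
      ccU n (Function.update c i 0) k = 0 := by
    intro k
    unfold ccU
    split
    · rename_i hk
      rw [Function.update_apply]
      split
      · right; rfl
      · left; rfl
    · left; rfl
  have hV : ∀ k, ccV n (Function.update c i 0) k = ccV n c k ∨
      ccV n (Function.update c i 0) k = 0 := by
    intro k
    unfold ccV
    split
    · rename_i hk
      rw [Function.update_apply]
      split
      · right; simp
      · left; rfl
    · left; rfl
  exact ⟨td_zero hu hU, dtd_zero hv hV, compat_zero hcomp hU hV⟩
end

section
/- Let c, c' be cubic coordinates of size n with c ≤ c' componentwise. Then there exists a cubic coordinate c'' of size n whose associated Tamari diagram equals that of c and whose associated dual Tamari diagram equals that of c' (i.e., max(c''_i,0) = max(c_i,0) and min(c''_i,0) = min(c'_i,0) for all i). -/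
lemma myPosPart (x y : ℤ) : (if 0 < x then x else min y 0).toNat = x.toNat := by
  rcases le_or_gt y 0 with h | h
  · rw [min_eq_left h]; split_ifs with h2 <;> omega
  · rw [min_eq_right h.le]; split_ifs with h2 <;> omega

lemma myNegPart (x y : ℤ) (hxy : x ≤ y) : (-(if 0 < x then x else min y 0)).toNat = (-y).toNat := by
  rcases le_or_gt y 0 with h | h
  · rw [min_eq_left h]; split_ifs with h2 <;> omega
  · rw [min_eq_right h.le]; split_ifs with h2 <;> omega

/-- If `c ≤ c'` are cubic coordinates, there is a cubic coordinate with the Tamari diagram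
of `c` and the dual Tamari diagram of `c'`. -/
theorem stmt11 {n : ℕ} (c c' : Fin (n - 1) → ℤ) (hc : IsCC n c) (hc' : IsCC n c')
    (hle : c ≤ c') :
    ∃ c'' : Fin (n - 1) → ℤ, IsCC n c'' ∧
      ∀ i, max (c'' i) 0 = max (c i) 0 ∧ min (c'' i) 0 = min (c' i) 0 := by
  refine ⟨fun i => if 0 < c i then c i else min (c' i) 0, ?_, ?_⟩
  · have hU : ccU n (fun i => if 0 < c i then c i else min (c' i) 0) = ccU n c := by
      funext j
      by_cases h : (j : ℕ) < n - 1
      · simp only [ccU, dif_pos h]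
        exact myPosPart _ _
      · simp only [ccU, dif_neg h]
    have hV : ccV n (fun i => if 0 < c i then c i else min (c' i) 0) = ccV n c' := by
      funext j
      by_cases h : 0 < (j : ℕ)
      · simp only [ccV, dif_pos h]
        exact myNegPart _ _ (hle _)
      · simp only [ccV, dif_neg h]
    rw [IsCC, IsTID, hU, hV]
    refine ⟨hc.1, hc'.2.1, ?_⟩
    intro i j hij hle2
    refine hc'.2.2 i j hij (le_trans hle2 ?_)
    by_cases h : (i : ℕ) < n - 1
    · simp only [ccU, dif_pos h]
      exact Int.toNat_le_toNat (hle _)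
    · simp only [ccU, dif_neg h]
      exact le_rfl
  · intro i
    have h1 : c i ≤ c' i := hle i
    refine ⟨?_, ?_⟩ <;> simp only []
    · split_ifs with h
      · rfl
      · rw [max_eq_right (min_le_right _ _), max_eq_right (by omega : c i ≤ 0)]
    · split_ifs with h
      · rw [min_eq_right (by omega : (0:ℤ) ≤ c i), min_eq_right (by omega : (0:ℤ) ≤ c' i)]
      · rw [min_assoc, min_self]
end

section
/- Let c be a cubic coordinate of size n and i ∈ [n-1] such that the minimal increasing ↑_i(c) is well-defined (i.e., some cubic coordinate exceeds c exactly in component i, and ↑_i(c) is the cover of c obtained by increasing only component i). If c_i < 0 then the i-th component of ↑_i(c) is ≤ 0, and if c_i ≥ 0 then the i-th component of ↑_i(c) is > 0. -/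
/-- `d = ↑_i(c)`: a cover of the cubic coordinate `c` among cubic coordinates, increasing
only component `i`. -/
def CoversAt (n : ℕ) (c d : Fin (n - 1) → ℤ) (i : Fin (n - 1)) : Prop :=
  IsCC n d ∧ (∀ j, j ≠ i → d j = c j) ∧ c i < d i ∧
  ¬ ∃ e : Fin (n - 1) → ℤ, IsCC n e ∧ c ≤ e ∧ e ≤ d ∧ e ≠ c ∧ e ≠ d

/-- A cell `⟨cm, cM⟩`: `cm` is a minimal-cellular cubic coordinate (it has a cover in each
component) and `cM = ↑_1(↑_2(⋯(↑_{n-1}(cm))⋯))` is the corresponding maximal-cellular. -/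
def IsCell (n : ℕ) (cm cM : Fin (n - 1) → ℤ) : Prop :=
  IsCC n cm ∧ (∀ i : Fin (n - 1), ∃ d, CoversAt n cm d i) ∧
  ∃ f : ℕ → (Fin (n - 1) → ℤ), f 0 = cm ∧ f (n - 1) = cM ∧
    ∀ k, ∀ h : k < n - 1, CoversAt n (f k) (f (k + 1)) ⟨n - 2 - k, by omega⟩

/-- The minimal increasing `↑_i(c)` keeps the sign convention: if `c_i < 0` then the new
component is `≤ 0`, and if `c_i ≥ 0` then the new component is `> 0`. -/
theorem stmt14 {n : ℕ} (c d : Fin (n - 1) → ℤ) (hc : IsCC n c) (i : Fin (n - 1))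
    (hcov : CoversAt n c d i) :
    (c i < 0 → d i ≤ 0) ∧ (0 ≤ c i → 0 < d i) := by
  obtain ⟨hd, heq, hlt, hmin⟩ := hcov
  refine ⟨?_, fun h => lt_of_le_of_lt h hlt⟩
  intro hneg
  by_contra hpos
  push_neg at hpos
  set e : Fin (n - 1) → ℤ := Function.update c i 0 with he
  have hei : e i = 0 := Function.update_self i 0 c
  have hej : ∀ j, j ≠ i → e j = c j := fun j hj => Function.update_of_ne hj 0 c
  -- ccU e = ccU c
  have hU : ccU n e = ccU n c := by
    funext j
    simp only [ccU]
    split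
    · rename_i hjn
      by_cases hji : (⟨j.val, hjn⟩ : Fin (n - 1)) = i
      · rw [hji, hei]
        omega
      · rw [hej _ hji]
    · rfl
  have hV0 : ∀ j : Fin n, j.val = i.val + 1 → ccV n e j = 0 := by
    intro j hj
    simp only [ccV]
    rw [dif_pos (by omega)]
    have : (⟨j.val - 1, by have := i.isLt; omega⟩ : Fin (n - 1)) = i := by
      apply Fin.ext; simp; omega
    rw [this, hei]
    rfl
  have hVeq : ∀ j : Fin n, j.val ≠ i.val + 1 → ccV n e j = ccV n c j := by
    intro j hj
    simp only [ccV]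
    split
    · rename_i h0
      congr 2
      apply hej
      intro hcon
      apply hj
      have := congrArg Fin.val hcon
      simp at this
      omega
    · rfl
  have hVle : ∀ j : Fin n, ccV n e j ≤ ccV n c j := by
    intro j
    by_cases hj : j.val = i.val + 1
    · rw [hV0 j hj]; exact Nat.zero_le _
    · rw [hVeq j hj]
  obtain ⟨hTD, hDTD, hComp⟩ := hc
  apply hmin
  refine ⟨e, ⟨?_, ?_, ?_⟩, ?_, ?_, ?_, ?_⟩
  · rw [hU]; exact hTD
  · constructor
    · intro j
      exact le_trans (hVle j) (hDTD.1 j)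
    · intro a b hba hab
      by_cases ha : a.val = i.val + 1
      · have h0 : ccV n e a = 0 := hV0 a ha
        rw [h0] at hab ⊢
        have : a = b := Fin.ext (by omega)
        subst this
        simpa using h0
      · rw [hVeq a ha] at hab ⊢
        by_cases hb : b.val = i.val + 1
        · rw [hV0 b hb]; exact Nat.zero_le _
        · rw [hVeq b hb]
          exact hDTD.2 a b hba hab
  · intro a b hab hu
    rw [hU] at hu
    exact lt_of_le_of_lt (hVle b) (hComp a b hab hu)
  · intro j
    by_cases hj : j = i
    · subst hj; rw [hei]; exact le_of_lt hneg
    · rw [hej j hj]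
  · intro j
    by_cases hj : j = i
    · subst hj; rw [hei]; exact le_of_lt hpos
    · rw [hej j hj, heq j hj]
  · intro hcon
    have := congrFun hcon i
    rw [hei] at this
    omega
  · intro hcon
    have := congrFun hcon i
    rw [hei] at this
    omega
end

section
/- Let ⟨c^m, c^M⟩ be a cell of size n, and let c ∈ ℤ^{n-1} be any tuple such that each component c_i equals either c^m_i or c^M_i. Then c is a cubic coordinate. Consequently, every cell contains at least 2^{n-1} cubic coordinates. -/
/-- Elementary integer characterization of cubic coordinates. -/
def CCC (n : ℕ) (c : Fin (n - 1) → ℤ) : Prop :=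
  (∀ p : Fin (n - 1), -(p.val : ℤ) - 1 ≤ c p ∧ c p ≤ (n : ℤ) - 1 - (p.val : ℤ)) ∧
  (∀ p q : Fin (n - 1), p.val < q.val →
    ((q.val : ℤ) - (p.val : ℤ) ≤ c p → c q ≤ c p - ((q.val : ℤ) - (p.val : ℤ)))) ∧
  (∀ p q : Fin (n - 1), p.val < q.val →
    ((q.val : ℤ) - (p.val : ℤ) ≤ -(c q) → c q + ((q.val : ℤ) - (p.val : ℤ)) ≤ c p)) ∧
  (∀ p q : Fin (n - 1), p.val < q.val →
    ((q.val : ℤ) + 1 - (p.val : ℤ) ≤ c p → (p.val : ℤ) - (q.val : ℤ) ≤ c q))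

lemma ccU_val {n : ℕ} (c : Fin (n - 1) → ℤ) (p : Fin (n - 1)) :
    ccU n c ⟨p.val, by omega⟩ = (c p).toNat := by
  have h : (p.val : ℕ) < n - 1 := p.isLt
  simp only [ccU, dif_pos h]

lemma ccU_of_lt {n : ℕ} (c : Fin (n - 1) → ℤ) (i : Fin n) (h : i.val < n - 1) :
    ccU n c i = (c ⟨i.val, h⟩).toNat := dif_pos h

lemma ccU_of_ge {n : ℕ} (c : Fin (n - 1) → ℤ) (i : Fin n) (h : ¬ i.val < n - 1) :
    ccU n c i = 0 := dif_neg h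

lemma ccV_val {n : ℕ} (c : Fin (n - 1) → ℤ) (p : Fin (n - 1)) :
    ccV n c ⟨p.val + 1, by omega⟩ = (-(c p)).toNat := by
  have h : 0 < p.val + 1 := Nat.succ_pos _
  rw [ccV, dif_pos h]
  rfl

lemma ccV_of_pos {n : ℕ} (c : Fin (n - 1) → ℤ) (i : Fin n) (h : 0 < i.val) :
    ccV n c i = (-(c ⟨i.val - 1, by have := i.isLt; omega⟩)).toNat := dif_pos h

lemma ccV_of_zero {n : ℕ} (c : Fin (n - 1) → ℤ) (i : Fin n) (h : ¬ 0 < i.val) :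
    ccV n c i = 0 := dif_neg h

lemma isCC_iff (n : ℕ) (c : Fin (n - 1) → ℤ) : IsCC n c ↔ CCC n c := by
  constructor
  · rintro ⟨hu, hv, hc⟩
    refine ⟨fun p => ?_, fun p q hpq hyp => ?_, fun p q hpq hyp => ?_, fun p q hpq hyp => ?_⟩
    · have h1 := hu.1 ⟨p.val, by omega⟩
      rw [ccU_val] at h1
      have h2 := hv.1 ⟨p.val + 1, by omega⟩
      rw [ccV_val] at h2
      have h2' : (-(c p)).toNat ≤ p.val + 1 := h2
      have h1' : (c p).toNat ≤ n - (p.val + 1) := h1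
      have := p.isLt
      constructor <;> omega
    · -- TD
      have h := hu.2 ⟨p.val, by omega⟩ ⟨q.val, by omega⟩ (show p.val ≤ q.val from hpq.le)
        (by rw [ccU_val]; show q.val - p.val ≤ (c p).toNat; omega)
      rw [ccU_val, ccU_val] at h
      have h' : (c q).toNat ≤ (c p).toNat - (q.val - p.val) := h
      omega
    · -- DTD
      have h := hv.2 ⟨q.val + 1, by omega⟩ ⟨p.val + 1, by omega⟩
        (show p.val + 1 ≤ q.val + 1 by omega)
        (by rw [ccV_val]; show q.val + 1 - (p.val + 1) ≤ (-(c q)).toNat; omega)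
      rw [ccV_val, ccV_val] at h
      have h' : (-(c p)).toNat ≤ (-(c q)).toNat - (q.val + 1 - (p.val + 1)) := h
      omega
    · -- Compat
      have h := hc ⟨p.val, by omega⟩ ⟨q.val + 1, by omega⟩ (show p.val < q.val + 1 by omega)
        (by rw [ccU_val]; show q.val + 1 - p.val ≤ (c p).toNat; omega)
      rw [ccV_val] at h
      have h' : (-(c q)).toNat < q.val + 1 - p.val := h
      omega
  · rintro ⟨hS, hT, hD, hC⟩
    refine ⟨⟨fun i => ?_, fun i j hij hyp => ?_⟩, ⟨fun i => ?_, fun i j hij hyp => ?_⟩,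
      fun i j hij hyp => ?_⟩
    · by_cases h : i.val < n - 1
      · rw [ccU_of_lt c i h]
        have h2 : c ⟨i.val, h⟩ ≤ (n : ℤ) - 1 - (i.val : ℤ) := (hS ⟨i.val, h⟩).2
        omega
      · rw [ccU_of_ge c i h]; omega
    · -- TD pair
      by_cases hi : i.val < n - 1
      · rcases Nat.eq_or_lt_of_le hij with heq | hlt
        · have hji : j = i := Fin.ext heq.symm
          subst hji; omega
        · by_cases hj : j.val < n - 1
          · rw [ccU_of_lt c i hi] at hyp ⊢
            rw [ccU_of_lt c j hj]
            have h := hT ⟨i.val, hi⟩ ⟨j.val, hj⟩ hlt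
            have h' : (j.val : ℤ) - (i.val : ℤ) ≤ c ⟨i.val, hi⟩ →
                c ⟨j.val, hj⟩ ≤ c ⟨i.val, hi⟩ - ((j.val : ℤ) - (i.val : ℤ)) := h
            omega
          · rw [ccU_of_ge c j hj]; omega
      · rw [ccU_of_ge c i hi] at hyp
        have hji : j.val = i.val := by omega
        rw [ccU_of_ge c j (by omega), ccU_of_ge c i hi]
        omega
    · -- DTD single
      by_cases h : 0 < i.val
      · rw [ccV_of_pos c i h]
        have h2 : -((⟨i.val - 1, by have := i.isLt; omega⟩ : Fin (n - 1)).val : ℤ) - 1 ≤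
            c ⟨i.val - 1, by have := i.isLt; omega⟩ := (hS _).1
        have h3 : ((⟨i.val - 1, by have := i.isLt; omega⟩ : Fin (n - 1)).val : ℕ) = i.val - 1 :=
          rfl
        omega
      · rw [ccV_of_zero c i h]; omega
    · -- DTD pair
      by_cases hi : 0 < i.val
      · rcases Nat.eq_or_lt_of_le hij with heq | hlt
        · have hji : j = i := Fin.ext heq
          subst hji; omega
        · by_cases hj : 0 < j.val
          · rw [ccV_of_pos c i hi] at hyp ⊢
            rw [ccV_of_pos c j hj]
            have h := hD ⟨j.val - 1, by have := j.isLt; omega⟩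
              ⟨i.val - 1, by have := i.isLt; omega⟩ (show j.val - 1 < i.val - 1 by omega)
            have h' : ((i.val - 1 : ℕ) : ℤ) - ((j.val - 1 : ℕ) : ℤ) ≤
                -(c ⟨i.val - 1, by have := i.isLt; omega⟩) →
                c ⟨i.val - 1, by have := i.isLt; omega⟩ +
                  (((i.val - 1 : ℕ) : ℤ) - ((j.val - 1 : ℕ) : ℤ)) ≤
                c ⟨j.val - 1, by have := j.isLt; omega⟩ := h
            omega
          · rw [ccV_of_zero c j hj]; omega
      · rw [ccV_of_zero c i hi] at hyp
        have hji : j.val = i.val := by omega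
        have e1 : ccV n c j = 0 := ccV_of_zero c j (by omega)
        rw [ccV_of_zero c i hi, e1]
        omega
    · -- Compat
      have hij' : i.val < j.val := hij
      have hi : i.val < n - 1 := by
        by_contra h
        rw [ccU_of_ge c i h] at hyp
        omega
      rw [ccU_of_lt c i hi] at hyp
      have hj : 0 < j.val := by omega
      rw [ccV_of_pos c j hj]
      by_cases hq : j.val - 1 = i.val
      · have he : (⟨j.val - 1, by have := j.isLt; omega⟩ : Fin (n - 1)) = ⟨i.val, hi⟩ :=
          Fin.ext hq
        rw [he]
        omega
      · have hlt : i.val < j.val - 1 := by omega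
        have h := hC ⟨i.val, hi⟩ ⟨j.val - 1, by have := j.isLt; omega⟩ hlt
        have h' : ((j.val - 1 : ℕ) : ℤ) + 1 - (i.val : ℤ) ≤ c ⟨i.val, hi⟩ →
            (i.val : ℤ) - ((j.val - 1 : ℕ) : ℤ) ≤ c ⟨j.val - 1, by have := j.isLt; omega⟩ := h
        omega

section Cell

variable {n : ℕ} {cm cM : Fin (n - 1) → ℤ} {f : ℕ → Fin (n - 1) → ℤ}

lemma covers_mid {c d : Fin (n - 1) → ℤ} {i : Fin (n - 1)} (h : CoversAt n c d i)
    {x : ℤ} (h1 : c i < x) (h2 : x < d i) : ¬ IsCC n (Function.update c i x) := by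
  intro hcc
  apply h.2.2.2
  refine ⟨Function.update c i x, hcc, Pi.le_def.mpr fun j => ?_, Pi.le_def.mpr fun j => ?_,
    ?_, ?_⟩
  · by_cases hj : j = i
    · subst hj; simp [h1.le]
    · simp [Function.update_of_ne hj]
  · by_cases hj : j = i
    · subst hj; simpa using h2.le
    · rw [Function.update_of_ne hj]
      exact (h.2.1 j hj).ge
  · intro he
    have h3 := congrFun he i
    simp at h3
    omega
  · intro he
    have h3 := congrFun he i
    simp at h3
    omega

lemma step_eq (hstep : ∀ k, ∀ h : k < n - 1, CoversAt n (f k) (f (k + 1)) ⟨n - 2 - k, by omega⟩)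
    (k : ℕ) (h : k < n - 1) (t : Fin (n - 1)) (ht : t.val ≠ n - 2 - k) :
    f (k + 1) t = f k t :=
  (hstep k h).2.1 t (fun he => ht (by rw [he]))

lemma chain_eq_above
    (hstep : ∀ k, ∀ h : k < n - 1, CoversAt n (f k) (f (k + 1)) ⟨n - 2 - k, by omega⟩) :
    ∀ m k, k ≤ m → m ≤ n - 1 → ∀ t : Fin (n - 1), n - 1 - k ≤ t.val → f m t = f k t := by
  intro m
  induction m with
  | zero => intro k hk _ t _; have : k = 0 := by omega
            rw [this]
  | succ m ih =>
    intro k hk hm t ht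
    rcases Nat.eq_or_lt_of_le hk with he | hl
    · rw [he]
    · have hs : m < n - 1 := by omega
      rw [step_eq hstep m hs t (by omega), ih k (by omega) (by omega) t ht]

lemma chain_hi (hfN : f (n - 1) = cM)
    (hstep : ∀ k, ∀ h : k < n - 1, CoversAt n (f k) (f (k + 1)) ⟨n - 2 - k, by omega⟩)
    (k : ℕ) (hk : k ≤ n - 1) (t : Fin (n - 1)) (ht : n - 1 - k ≤ t.val) : f k t = cM t := by
  rw [← chain_eq_above hstep (n - 1) k hk le_rfl t ht, hfN]

lemma chain_lo (hf0 : f 0 = cm)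
    (hstep : ∀ k, ∀ h : k < n - 1, CoversAt n (f k) (f (k + 1)) ⟨n - 2 - k, by omega⟩) :
    ∀ k, k ≤ n - 1 → ∀ t : Fin (n - 1), t.val + k ≤ n - 2 → f k t = cm t := by
  intro k
  induction k with
  | zero => intro _ t _; rw [hf0]
  | succ k ih =>
    intro hk t ht
    have hs : k < n - 1 := by omega
    rw [step_eq hstep k hs t (by omega), ih (by omega) t (by omega)]

lemma chain_cc (hcm : IsCC n cm) (hf0 : f 0 = cm)
    (hstep : ∀ k, ∀ h : k < n - 1, CoversAt n (f k) (f (k + 1)) ⟨n - 2 - k, by omega⟩) :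
    ∀ k, k ≤ n - 1 → IsCC n (f k) := by
  intro k
  induction k with
  | zero => intro _; rw [hf0]; exact hcm
  | succ k ih =>
    intro hk
    exact (hstep k (by omega)).1

lemma chain_covers
    (hstep : ∀ k, ∀ h : k < n - 1, CoversAt n (f k) (f (k + 1)) ⟨n - 2 - k, by omega⟩)
    (p : Fin (n - 1)) : CoversAt n (f (n - 2 - p.val)) (f (n - 1 - p.val)) p := by
  have hp := p.isLt
  have hk : n - 2 - p.val < n - 1 := by omega
  have h2 : n - 1 - p.val = (n - 2 - p.val) + 1 := by omega
  rw [h2]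
  convert hstep (n - 2 - p.val) hk using 2
  omega

lemma cm_lt_cM (hf0 : f 0 = cm) (hfN : f (n - 1) = cM)
    (hstep : ∀ k, ∀ h : k < n - 1, CoversAt n (f k) (f (k + 1)) ⟨n - 2 - k, by omega⟩)
    (t : Fin (n - 1)) : cm t < cM t := by
  have hp := t.isLt
  have h := (chain_covers hstep t).2.2.1
  rwa [chain_lo hf0 hstep (n - 2 - t.val) (by omega) t (by omega),
    chain_hi hfN hstep (n - 1 - t.val) (by omega) t (by omega)] at h

lemma lemZ (hcm : IsCC n cm) (hf0 : f 0 = cm) (hfN : f (n - 1) = cM)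
    (hstep : ∀ k, ∀ h : k < n - 1, CoversAt n (f k) (f (k + 1)) ⟨n - 2 - k, by omega⟩)
    (t : Fin (n - 1)) (h1 : cm t < 0) : cM t ≤ 0 := by
  by_contra h2
  push_neg at h2
  have hp := t.isLt
  have hAcc : CCC n (f (n - 2 - t.val)) := (isCC_iff n _).1 (chain_cc hcm hf0 hstep _ (by omega))
  have hAt : f (n - 2 - t.val) t = cm t := chain_lo hf0 hstep _ (by omega) t (by omega)
  have hBt : f (n - 1 - t.val) t = cM t := chain_hi hfN hstep _ (by omega) t (by omega)
  refine covers_mid (chain_covers hstep t) (x := 0) (by omega) (by omega) ?_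
  rw [isCC_iff]
  refine ⟨fun r => ?_, fun r s hrs => ?_, fun r s hrs => ?_, fun r s hrs => ?_⟩
  · by_cases hr : r = t
    · subst hr
      simp only [Function.update_self]
      have := r.isLt
      constructor <;> omega
    · rw [Function.update_of_ne hr]
      exact hAcc.1 r
  · by_cases hs : s = t
    · subst hs
      have hr : r ≠ s := by intro h; rw [h] at hrs; omega
      rw [Function.update_of_ne hr, Function.update_self]
      intro hyp
      omega
    · rw [Function.update_of_ne hs]
      by_cases hr : r = t
      · subst hr
        rw [Function.update_self]
        intro hyp
        exfalso; omega
      · rw [Function.update_of_ne hr]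
        exact hAcc.2.1 r s hrs
  · by_cases hs : s = t
    · subst hs
      rw [Function.update_self]
      intro hyp
      exfalso; omega
    · rw [Function.update_of_ne hs]
      by_cases hr : r = t
      · subst hr
        rw [Function.update_self]
        intro hyp
        have h3 := hAcc.2.2.1 r s hrs hyp
        rw [hAt] at h3
        omega
      · rw [Function.update_of_ne hr]
        exact hAcc.2.2.1 r s hrs
  · by_cases hs : s = t
    · subst hs
      have hr : r ≠ s := by intro h; rw [h] at hrs; omega
      rw [Function.update_self, Function.update_of_ne hr]
      intro hyp
      omega
    · rw [Function.update_of_ne hs]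
      by_cases hr : r = t
      · subst hr
        rw [Function.update_self]
        intro hyp
        exfalso; omega
      · rw [Function.update_of_ne hr]
        exact hAcc.2.2.2 r s hrs

lemma claimA (hcm : IsCC n cm) (hcov : ∀ i, ∃ d, CoversAt n cm d i)
    (hf0 : f 0 = cm) (hfN : f (n - 1) = cM)
    (hstep : ∀ k, ∀ h : k < n - 1, CoversAt n (f k) (f (k + 1)) ⟨n - 2 - k, by omega⟩) :
    ∀ g : ℕ, ∀ p q : Fin (n - 1), q.val - p.val = g → p.val < q.val →
      (q.val : ℤ) + 1 - (p.val : ℤ) ≤ cM p → (p.val : ℤ) - (q.val : ℤ) ≤ cm q := by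
  have hcmC : CCC n cm := (isCC_iff n cm).1 hcm
  intro g
  induction g using Nat.strong_induction_on with
  | _ g IH =>
  intro p q hg hpq hyp
  by_contra hcon
  push_neg at hcon
  have hpl := p.isLt
  have hql := q.isLt
  have hZq : cM q ≤ 0 := lemZ hcm hf0 hfN hstep q (by omega)
  have hZp : 0 ≤ cm p := by
    by_contra h
    have := lemZ hcm hf0 hfN hstep p (by omega)
    omega
  have hcmp : cm p ≤ (q.val : ℤ) - (p.val : ℤ) := by
    by_contra h
    push_neg at h
    have := hcmC.2.2.2 p q hpq (by omega)
    omega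
  obtain ⟨d, hd⟩ := hcov p
  have hdC : CCC n d := (isCC_iff n d).1 hd.1
  have hqp : q ≠ p := by intro h; rw [h] at hpq; omega
  have hdq : d q = cm q := hd.2.1 q hqp
  have hdp : d p ≤ (q.val : ℤ) - (p.val : ℤ) := by
    by_contra h
    push_neg at h
    have h2 := hdC.2.2.2 p q hpq (by omega)
    rw [hdq] at h2
    omega
  have hdgt : cm p < d p := hd.2.2.1
  have hcmp' : cm p ≤ (q.val : ℤ) - (p.val : ℤ) - 1 := by omega
  have hAcc : CCC n (f (n - 2 - p.val)) :=
    (isCC_iff n _).1 (chain_cc hcm hf0 hstep _ (by omega))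
  have hBcc : CCC n (f (n - 1 - p.val)) :=
    (isCC_iff n _).1 (chain_cc hcm hf0 hstep _ (by omega))
  have hAp : f (n - 2 - p.val) p = cm p := chain_lo hf0 hstep _ (by omega) p (by omega)
  have hBp : f (n - 1 - p.val) p = cM p := chain_hi hfN hstep _ (by omega) p (by omega)
  have hAup : ∀ t : Fin (n - 1), p.val < t.val → f (n - 2 - p.val) t = cM t := fun t ht =>
    chain_hi hfN hstep _ (by omega) t (by omega)
  have hBlo : ∀ t : Fin (n - 1), t.val < p.val → f (n - 1 - p.val) t = cm t := fun t ht =>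
    chain_lo hf0 hstep _ (by omega) t (by omega)
  refine covers_mid (chain_covers hstep p) (x := (q.val : ℤ) - (p.val : ℤ))
    (by omega) (by omega) ?_
  rw [isCC_iff]
  refine ⟨fun r => ?_, fun r s hrs => ?_, fun r s hrs => ?_, fun r s hrs => ?_⟩
  · by_cases hr : r = p
    · subst hr
      rw [Function.update_self]
      constructor <;> omega
    · rw [Function.update_of_ne hr]
      exact hAcc.1 r
  · by_cases hs : s = p
    · subst hs
      have hr : r ≠ s := fun h => by rw [h] at hrs; omega
      rw [Function.update_of_ne hr, Function.update_self]
      have hAr : f (n - 2 - s.val) r = cm r := chain_lo hf0 hstep _ (by omega) r (by omega)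
      have hBr : f (n - 1 - s.val) r = cm r := hBlo r hrs
      have h3 := hBcc.2.1 r s hrs
      rw [hBp, hBr] at h3
      rw [hAr]
      intro hyp2
      have h4 := h3 hyp2
      omega
    · rw [Function.update_of_ne hs]
      by_cases hr : r = p
      · subst hr
        rw [Function.update_self]
        intro hyp2
        rw [hAup s hrs]
        by_cases hsq : s.val = q.val
        · have hsq' : s = q := Fin.ext hsq
          rw [hsq']
          omega
        · have hslt : s.val < q.val := by omega
          by_contra hbad
          push_neg at hbad
          have h5 := IH (q.val - s.val) (by omega) s q rfl (by omega) (by omega)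
          omega
      · rw [Function.update_of_ne hr]
        exact hAcc.2.1 r s hrs
  · by_cases hs : s = p
    · subst hs
      have hr : r ≠ s := fun h => by rw [h] at hrs; omega
      rw [Function.update_of_ne hr, Function.update_self]
      intro hyp2
      exfalso
      omega
    · rw [Function.update_of_ne hs]
      by_cases hr : r = p
      · subst hr
        rw [Function.update_self]
        intro hyp2
        have h3 := hAcc.2.2.1 r s hrs hyp2
        rw [hAp] at h3
        omega
      · rw [Function.update_of_ne hr]
        exact hAcc.2.2.1 r s hrs
  · by_cases hs : s = p
    · subst hs
      have hr : r ≠ s := fun h => by rw [h] at hrs; omega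
      rw [Function.update_of_ne hr, Function.update_self]
      intro _
      omega
    · rw [Function.update_of_ne hs]
      by_cases hr : r = p
      · subst hr
        rw [Function.update_self]
        intro hyp2
        rw [hAup s hrs]
        have hslt : s.val < q.val := by omega
        have h5 := IH (s.val - r.val) (by omega) r s rfl (by omega) (by omega)
        have h6 := cm_lt_cM hf0 hfN hstep s
        omega
      · rw [Function.update_of_ne hr]
        exact hAcc.2.2.2 r s hrs

lemma mix_cc (hcm : IsCC n cm) (hcov : ∀ i, ∃ d, CoversAt n cm d i)
    (hf0 : f 0 = cm) (hfN : f (n - 1) = cM)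
    (hstep : ∀ k, ∀ h : k < n - 1, CoversAt n (f k) (f (k + 1)) ⟨n - 2 - k, by omega⟩)
    (c : Fin (n - 1) → ℤ) (hmix : ∀ i, c i = cm i ∨ c i = cM i) : IsCC n c := by
  have hcmC : CCC n cm := (isCC_iff n cm).1 hcm
  have hWcc : ∀ q : Fin (n - 1), CCC n (f (n - 1 - q.val)) := fun q =>
    (isCC_iff n _).1 (chain_cc hcm hf0 hstep _ (by omega))
  have hWlo : ∀ p q : Fin (n - 1), p.val < q.val → f (n - 1 - q.val) p = cm p := fun p q h =>
    chain_lo hf0 hstep _ (by omega) p (by have := q.isLt; omega)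
  have hWhi : ∀ q : Fin (n - 1), f (n - 1 - q.val) q = cM q := fun q =>
    chain_hi hfN hstep _ (by omega) q (by omega)
  have hlt := cm_lt_cM hf0 hfN hstep (cm := cm) (cM := cM)
  have hMC : CCC n cM := by
    have h2 := (isCC_iff n _).1 (chain_cc hcm hf0 hstep (n - 1) le_rfl)
    rwa [hfN] at h2
  rw [isCC_iff]
  refine ⟨fun p => ?_, fun p q hpq => ?_, fun p q hpq => ?_, fun p q hpq => ?_⟩
  · rcases hmix p with h | h <;> rw [h]
    · exact hcmC.1 p
    · exact hMC.1 p
  · rcases hmix p with hp | hp <;> rcases hmix q with hq | hq <;> rw [hp, hq]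
    · exact hcmC.2.1 p q hpq
    · have h1 := (hWcc q).2.1 p q hpq
      rwa [hWlo p q hpq, hWhi q] at h1
    · intro hyp
      have h1 := hMC.2.1 p q hpq hyp
      have h2 := hlt q
      omega
    · exact hMC.2.1 p q hpq
  · rcases hmix p with hp | hp <;> rcases hmix q with hq | hq <;> rw [hp, hq]
    · exact hcmC.2.2.1 p q hpq
    · have h1 := (hWcc q).2.2.1 p q hpq
      rwa [hWlo p q hpq, hWhi q] at h1
    · intro hyp
      have h1 := hcmC.2.2.1 p q hpq hyp
      have h2 := hlt p
      omega
    · exact hMC.2.2.1 p q hpq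
  · rcases hmix p with hp | hp <;> rcases hmix q with hq | hq <;> rw [hp, hq]
    · exact hcmC.2.2.2 p q hpq
    · have h1 := (hWcc q).2.2.2 p q hpq
      rwa [hWlo p q hpq, hWhi q] at h1
    · exact fun hyp => claimA hcm hcov hf0 hfN hstep (q.val - p.val) p q rfl hpq hyp
    · exact hMC.2.2.2 p q hpq

end Cell


/-- Any tuple whose components come from `cm` or `cM` of a cell is a cubic coordinate;
consequently each cell contains at least `2^(n-1)` cubic coordinates. -/
theorem stmt15 {n : ℕ} (cm cM : Fin (n - 1) → ℤ) (h : IsCell n cm cM) :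
    (∀ c : Fin (n - 1) → ℤ, (∀ i, c i = cm i ∨ c i = cM i) → IsCC n c) ∧
    2 ^ (n - 1) ≤ Nat.card {c : Fin (n - 1) → ℤ // IsCC n c ∧ cm ≤ c ∧ c ≤ cM} := by
  obtain ⟨hcm, hcov, f, hf0, hfN, hstep⟩ := h
  have hmixcc : ∀ c : Fin (n - 1) → ℤ, (∀ i, c i = cm i ∨ c i = cM i) → IsCC n c :=
    fun c hc => mix_cc hcm hcov hf0 hfN hstep c hc
  refine ⟨hmixcc, ?_⟩
  have hlt := cm_lt_cM hf0 hfN hstep (cm := cm) (cM := cM)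
  haveI hfin : Finite {c : Fin (n - 1) → ℤ // IsCC n c ∧ cm ≤ c ∧ c ≤ cM} := by
    let F : {c : Fin (n - 1) → ℤ // IsCC n c ∧ cm ≤ c ∧ c ≤ cM} →
        (∀ i : Fin (n - 1), Set.Icc (cm i) (cM i)) :=
      fun c i => ⟨c.1 i, c.2.2.1 i, c.2.2.2 i⟩
    haveI : ∀ i : Fin (n - 1), Finite (Set.Icc (cm i) (cM i)) :=
      fun i => (Set.finite_Icc _ _).to_subtype
    refine Finite.of_injective F ?_
    intro a b hab
    apply Subtype.ext
    funext i
    exact congrArg Subtype.val (congrFun hab i)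
  let Φ : (Fin (n - 1) → Bool) → {c : Fin (n - 1) → ℤ // IsCC n c ∧ cm ≤ c ∧ c ≤ cM} :=
    fun s => ⟨fun i => if s i then cM i else cm i,
      hmixcc _ (fun i => by by_cases hi : s i <;> simp [hi]),
      Pi.le_def.mpr fun i => by
        by_cases hi : s i
        · simp only [hi, if_true]; exact (hlt i).le
        · simp [hi],
      Pi.le_def.mpr fun i => by
        by_cases hi : s i
        · simp [hi]
        · simp only [hi, if_neg, Bool.false_eq_true, if_false]; exact (hlt i).le⟩
  have hinj : Function.Injective Φ := by
    intro a b hab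
    have h1 := congrArg Subtype.val hab
    funext i
    have h2 := congrFun h1 i
    simp only [Φ] at h2
    by_cases ha : a i <;> by_cases hb : b i <;>
      simp only [ha, hb, if_true, if_false, Bool.false_eq_true] at h2 ⊢
    · have := hlt i; omega
    · have := hlt i; omega
  calc 2 ^ (n - 1) = Nat.card (Fin (n - 1) → Bool) := by
        simp [Nat.card_eq_fintype_card]
    _ ≤ Nat.card {c : Fin (n - 1) → ℤ // IsCC n c ∧ cm ≤ c ∧ c ≤ cM} :=
        Nat.card_le_card_of_injective Φ hinj
end

section
/- For any cell ⟨c^m, c^M⟩ of size n and any i ∈ [n-1]: if c^m_i < 0 then c^M_i ≤ 0, and if c^m_i ≥ 0 then c^M_i > 0. In particular the map Γ assigning to the cell the tuple whose i-th component is c^m_i when c^m_i < 0 and c^M_i when c^m_i ≥ 0 has all components nonzero, and Γ(⟨c^m, c^M⟩) is a synchronized cubic coordinate of size n. -/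
-- helper lemmas, appended after defs
section Helpers

variable {n : ℕ}

lemma ccU_pos (c : Fin (n-1) → ℤ) (i : Fin n) (h : i.val < n - 1) :
    ccU n c i = (c ⟨i.val, h⟩).toNat := dif_pos h

lemma ccU_last (c : Fin (n-1) → ℤ) (i : Fin n) (h : ¬ i.val < n - 1) :
    ccU n c i = 0 := dif_neg h

lemma ccV_pos (c : Fin (n-1) → ℤ) (i : Fin n) (h : 0 < i.val) :
    ccV n c i = (-(c ⟨i.val - 1, by have := i.isLt; omega⟩)).toNat := dif_pos h

lemma ccV_zero (c : Fin (n-1) → ℤ) (i : Fin n) (h : ¬ 0 < i.val) :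
    ccV n c i = 0 := dif_neg h

/-- decreasing some v entries to zero preserves TID -/
lemma tid_v_mono {u v v' : Fin n → ℕ} (h : IsTID u v)
    (h1 : ∀ i, v' i = v i ∨ v' i = 0) : IsTID u v' := by
  obtain ⟨hTD, ⟨hD1, hD2⟩, hC⟩ := h
  refine ⟨hTD, ⟨?_, ?_⟩, ?_⟩
  · intro i
    rcases h1 i with h' | h' <;> rw [h']
    · exact hD1 i
    · exact Nat.zero_le _
  · intro i j hji hle
    rcases h1 j with hj | hj <;> rw [hj]
    · rcases h1 i with hi | hi
      · rw [hi] at hle ⊢; exact hD2 i j hji hle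
      · rw [hi] at hle
        have : i.val = j.val := by omega
        have : i = j := Fin.ext this
        subst this
        rw [hi]; omega
    · exact Nat.zero_le _
  · intro i j hij hle
    rcases h1 j with hj | hj <;> rw [hj]
    · exact hC i j hij hle
    · have := Fin.lt_def.mp hij; omega

lemma isCC_small (c : Fin (n-1) → ℤ) (hn : n ≤ 1) : IsCC n c := by
  have hu : ∀ i : Fin n, ccU n c i = 0 := by
    intro i; apply ccU_last; omega
  have hv : ∀ i : Fin n, ccV n c i = 0 := by
    intro i; apply ccV_zero; have := i.isLt; omega
  refine ⟨⟨?_, ?_⟩, ⟨?_, ?_⟩, ?_⟩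
  · intro i; rw [hu]; exact Nat.zero_le _
  · intro i j hji hle; rw [hu]; exact Nat.zero_le _
  · intro i; rw [hv]; exact Nat.zero_le _
  · intro i j hji hle; rw [hv]; exact Nat.zero_le _
  · intro i j hij hle
    rw [hu] at hle
    have := Fin.lt_def.mp hij; omega

/-- zeroing a nonpositive component preserves CC -/
lemma zeroCC (c : Fin (n-1) → ℤ) (p : Fin (n-1)) (hc : IsCC n c) (hneg : c p ≤ 0) :
    IsCC n (fun q => if q = p then 0 else c q) := by
  set e : Fin (n-1) → ℤ := fun q => if q = p then 0 else c q with he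
  have hU : ccU n e = ccU n c := by
    funext i
    by_cases h : i.val < n - 1
    · rw [ccU_pos _ _ h, ccU_pos _ _ h, he]
      simp only
      split_ifs with h'
      · rw [h']; omega
      · rfl
    · rw [ccU_last _ _ h, ccU_last _ _ h]
  have hV : ∀ i : Fin n, ccV n e i = ccV n c i ∨ ccV n e i = 0 := by
    intro i
    by_cases h : 0 < i.val
    · rw [ccV_pos _ _ h, ccV_pos _ _ h, he]
      simp only
      split_ifs with h'
      · right; omega
      · left; rfl
    · right; exact ccV_zero _ _ h
  have := tid_v_mono (v' := ccV n e) hc hV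
  rw [IsCC, hU]
  exact this

end Helpers
section Helpers2
variable {n : ℕ}

/-- extraction of the compatibility condition in integer terms -/
lemma compat_extract (c : Fin (n-1) → ℤ) (hc : IsCC n c) (a b : ℕ)
    (hab : a ≤ b) (hb : b < n - 1) (h1 : (b - a + 1 : ℕ) ≤ (c ⟨a, by omega⟩).toNat) :
    ((-(c ⟨b, hb⟩)).toNat) < b - a + 1 := by
  have ha : a < n - 1 := by omega
  have hbn : b + 1 < n := by omega
  have han : a < n := by omega
  have hlt : (⟨a, han⟩ : Fin n) < ⟨b+1, hbn⟩ := by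
    rw [Fin.lt_def]; simp; omega
  have hcomp := hc.2.2 ⟨a, han⟩ ⟨b+1, hbn⟩ hlt
  rw [ccU_pos c ⟨a, han⟩ ha, ccV_pos c ⟨b+1, hbn⟩ (by simp)] at hcomp
  simp only at hcomp
  have hidx : (⟨b + 1 - 1, by omega⟩ : Fin (n-1)) = ⟨b, hb⟩ := by
    apply Fin.ext; simp
  rw [hidx] at hcomp
  have := hcomp (by simp; omega)
  simpa using by omega

/-- the surgery lemma: lowering component `a` of a CC `d` to `b - a` stays CC,
provided `d a ≥ b - a + 1` and `d q ≤ b - q` for `a < q ≤ b`. -/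
lemma eCC (d : Fin (n-1) → ℤ) (a b : ℕ) (hab : a < b) (hb : b ≤ n - 2) (hn : 2 ≤ n)
    (hd : IsCC n d) (hda : ((b : ℤ) - a + 1) ≤ d ⟨a, by omega⟩)
    (hq : ∀ (q : ℕ) (hq' : q < n - 1), a < q → q ≤ b → d ⟨q, hq'⟩ ≤ (b : ℤ) - q) :
    IsCC n (fun q => if q.val = a then ((b : ℤ) - a) else d q) := by
  have ha : a < n - 1 := by omega
  have hbn : b < n - 1 := by omega
  set e : Fin (n-1) → ℤ := fun q => if q.val = a then ((b : ℤ) - a) else d q with he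
  obtain ⟨⟨hT1, hT2⟩, hDTD, hC⟩ := hd
  -- v's are equal
  have hV : ccV n e = ccV n d := by
    funext i
    by_cases h : 0 < i.val
    · rw [ccV_pos _ _ h, ccV_pos _ _ h, he]
      simp only
      split_ifs with h'
      · have hidx : (⟨i.val - 1, by have := i.isLt; omega⟩ : Fin (n-1)) = ⟨a, ha⟩ := by
          apply Fin.ext; simpa using h'
        rw [hidx]
        omega
      · rfl
    · rw [ccV_zero _ _ h, ccV_zero _ _ h]
  -- u values of e
  have hUa : ∀ (i : Fin n), i.val = a → ccU n e i = b - a := by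
    intro i hi
    rw [ccU_pos e i (by omega)]
    simp only [he, hi, if_pos rfl]
    omega
  have hUne : ∀ (i : Fin n) (h : i.val < n - 1), i.val ≠ a →
      ccU n e i = ccU n d i := by
    intro i h hne
    rw [ccU_pos e i h, ccU_pos d i h]
    simp only [he, if_neg hne]
  refine ⟨⟨?_, ?_⟩, hV ▸ hDTD, ?_⟩
  · -- TD1
    intro i
    by_cases h : i.val < n - 1
    · by_cases h' : i.val = a
      · rw [hUa i h']; omega
      · rw [hUne i h h']; exact hT1 i
    · rw [ccU_last _ _ h]; exact Nat.zero_le _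
  · -- TD2
    intro i j hij hle
    by_cases hj : j.val < n - 1
    · by_cases hi : i.val < n - 1
      · by_cases hia : i.val = a
        · rw [hUa i hia] at hle ⊢
          by_cases hja : j.val = a
          · have : i = j := Fin.ext (by omega)
            subst this
            rw [hUa i hia]; omega
          · have hja2 : a < j.val := by omega
            rw [hUne j hj hja, ccU_pos d j hj]
            have := hq j.val hj hja2 (by omega)
            omega
        · rw [hUne i hi hia] at hle ⊢
          by_cases hja : j.val = a
          · rw [hUa j hja]
            have h2 := hT2 i ⟨a, by omega⟩ (by simp; omega)
            rw [ccU_pos d ⟨a, by omega⟩ ha, ccU_pos d i hi] at h2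
            simp only at h2
            rw [ccU_pos d i hi] at hle ⊢
            have h3 := h2 (by simpa using by omega)
            simp only [hja] at *
            omega
          · rw [hUne j hj hja]
            have h2 := hT2 i j hij
            rw [ccU_pos d i hi] at *
            exact h2 hle
      · -- i.val ≥ n-1 so u e i = 0, j = i
        rw [ccU_last _ _ hi] at hle
        have : i = j := Fin.ext (by omega)
        subst this
        rw [ccU_last _ _ hi]
        omega
    · rw [ccU_last _ _ hj]; exact Nat.zero_le _
  · -- Compatible
    rw [hV]
    intro i j hij hle
    have hij' := Fin.lt_def.mp hij
    by_cases hi : i.val < n - 1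
    · by_cases hia : i.val = a
      · rw [hUa i hia] at hle
        have h2 := hC ⟨a, by omega⟩ j (by rw [Fin.lt_def]; simp; omega)
        rw [ccU_pos d ⟨a, by omega⟩ ha] at h2
        simp only at h2
        have h3 := h2 (by omega)
        simpa [hia] using by omega
      · rw [hUne i hi hia, ccU_pos d i hi] at hle
        have h2 := hC i j hij
        rw [ccU_pos d i hi] at h2
        exact h2 hle
    · rw [ccU_last _ _ hi] at hle
      omega

end Helpers2
/-- For a cell, signs are preserved between `cm` and `cM`, and the tuple `Γ(⟨cm,cM⟩)`
(taking `cm_i` if `cm_i < 0` and `cM_i` otherwise) is a synchronized cubic coordinate. -/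
theorem stmt16 {n : ℕ} (cm cM : Fin (n - 1) → ℤ) (h : IsCell n cm cM) :
    (∀ i, (cm i < 0 → cM i ≤ 0) ∧ (0 ≤ cm i → 0 < cM i)) ∧
    (∀ i, (if cm i < 0 then cm i else cM i) ≠ 0) ∧
    IsCC n (fun i => if cm i < 0 then cm i else cM i) := by
  by_cases hn : n ≤ 1
  · have hempty : ∀ i : Fin (n-1), False := by
      intro i; have := i.isLt; omega
    exact ⟨fun i => (hempty i).elim, fun i => (hempty i).elim, isCC_small _ hn⟩
  push_neg at hn
  have hn2 : 2 ≤ n := hn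
  obtain ⟨hcc, hcov, f, hf0, hfN, hstep⟩ := h
  -- chain lemmas
  have hlow : ∀ k, k ≤ n - 1 → ∀ j : Fin (n-1), j.val < n - 1 - k → f k j = cm j := by
    intro k
    induction k with
    | zero => intro _ j _; rw [hf0]
    | succ k ih =>
        intro hk j hj
        have hk' : k < n - 1 := by omega
        have hne : j ≠ ⟨n - 2 - k, by omega⟩ := by
          intro hEq
          have := congrArg Fin.val hEq
          simp only at this
          omega
        rw [(hstep k hk').2.1 j hne]
        exact ih (by omega) j (by omega)
  have hhigh : ∀ t k, k ≤ n - 1 → t = n - 1 - k → ∀ j : Fin (n-1),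
      n - 1 - k ≤ j.val → f k j = cM j := by
    intro t
    induction t with
    | zero =>
        intro k hk ht j hj
        have : k = n - 1 := by omega
        subst this
        rw [hfN]
    | succ t ih =>
        intro k hk ht j hj
        have hk' : k < n - 1 := by omega
        have hne : j ≠ ⟨n - 2 - k, by omega⟩ := by
          intro hEq
          have := congrArg Fin.val hEq
          simp only at this
          omega
        rw [← (hstep k hk').2.1 j hne]
        exact ih (k+1) (by omega) (by omega) j (by omega)
  have hCCk : ∀ k, k ≤ n - 1 → IsCC n (f k) := by
    intro k hk
    cases k with
    | zero => rw [hf0]; exact hcc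
    | succ k => exact (hstep k (by omega)).1
  -- Part 1
  have key1 : ∀ j : Fin (n-1), cm j < cM j ∧ (cm j < 0 → cM j ≤ 0) := by
    intro j
    set k := n - 2 - j.val with hkdef
    have hjv : j.val < n - 1 := j.isLt
    have hk : k < n - 1 := by omega
    have hstep' := hstep k hk
    have hidx : (⟨n - 2 - k, by omega⟩ : Fin (n-1)) = j := by
      apply Fin.ext; simp only; omega
    rw [hidx] at hstep'
    have h1 : f k j = cm j := hlow k (by omega) j (by omega)
    have h2 : f (k+1) j = cM j := hhigh (n - 1 - (k+1)) (k+1) (by omega) rfl j (by omega)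
    have hlt : cm j < cM j := by
      have := hstep'.2.2.1
      rw [h1, h2] at this
      exact this
    refine ⟨hlt, ?_⟩
    intro hneg
    by_contra hpos
    push_neg at hpos
    apply hstep'.2.2.2
    refine ⟨fun q => if q = j then 0 else f k q, zeroCC (f k) j (hCCk k (by omega)) (by rw [h1]; omega), ?_, ?_, ?_, ?_⟩
    · intro q
      by_cases hq : q = j
      · simp only [hq, if_pos rfl]; rw [h1]; omega
      · simp only [if_neg hq]; exact le_rfl
    · intro q
      by_cases hq : q = j
      · simp only [hq, if_pos rfl]; rw [h2]; omega
      · simp only [if_neg hq]; rw [(hstep'.2.1 q hq)]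
    · intro hEq
      have h9 := congrFun hEq j
      simp at h9
      omega
    · intro hEq
      have h9 := congrFun hEq j
      simp at h9
      omega
  -- Lemma L
  have keyL : ∀ t (a b : ℕ) (ha : a < n - 1) (hb' : b < n - 1), b - a = t → a ≤ b → b ≤ n - 2 →
      ((b : ℕ) - a + 1 ≤ (-(cm ⟨b, hb'⟩)).toNat) → (cM ⟨a, ha⟩ : ℤ) ≤ (b : ℤ) - a := by
    intro t
    induction t using Nat.strong_induction_on with
    | _ t ih =>
      intro a b ha hb' ht hab hb hhyp
      have hcmb : cm ⟨b, hb'⟩ ≤ (a : ℤ) - b - 1 := by omega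
      rcases eq_or_lt_of_le hab with hEq | hab'
      · subst hEq
        have := (key1 ⟨a, ha⟩).2 (by omega)
        omega
      · by_contra hcon
        push_neg at hcon
        -- cM a ≥ b - a + 1
        have hcma : (cm ⟨a, ha⟩ : ℤ) ≤ (b : ℤ) - a := by
          by_contra hcma'
          push_neg at hcma'
          have h1 : (b - a + 1 : ℕ) ≤ (cm ⟨a, ha⟩).toNat := by omega
          have := compat_extract cm hcc a b hab hb' h1
          omega
        rcases eq_or_lt_of_le hcma with hEq2 | hlt2
        · -- cm a = b - a : contradiction with existence of cover at a from cm
          obtain ⟨d, hdCC, hdoff, hdlt, _⟩ := hcov ⟨a, ha⟩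
          have hda : (b - a + 1 : ℕ) ≤ (d ⟨a, ha⟩).toNat := by omega
          have hext := compat_extract d hdCC a b hab hb' hda
          have hdb : d ⟨b, hb'⟩ = cm ⟨b, hb'⟩ := by
            apply hdoff
            intro hEq3
            have := congrArg Fin.val hEq3
            simp only at this
            omega
          rw [hdb] at hext
          omega
        · -- cm a < b - a : surgery on the chain
          set k := n - 2 - a with hkdef
          have hk : k < n - 1 := by omega
          have hstep' := hstep k hk
          have hidx : (⟨n - 2 - k, by omega⟩ : Fin (n-1)) = ⟨a, ha⟩ := by
            apply Fin.ext; simp only; omega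
          rw [hidx] at hstep'
          have hDa : f (k+1) ⟨a, ha⟩ = cM ⟨a, ha⟩ :=
            hhigh (n - 1 - (k+1)) (k+1) (by omega) rfl _ (by simp only; omega)
          have hfka : f k ⟨a, ha⟩ = cm ⟨a, ha⟩ := hlow k (by omega) _ (by simp only; omega)
          have hDq : ∀ (q : ℕ) (hq' : q < n - 1), a < q → q ≤ b →
              f (k+1) ⟨q, hq'⟩ ≤ (b : ℤ) - q := by
            intro q hq' haq hqb
            have hDqM : f (k+1) ⟨q, hq'⟩ = cM ⟨q, hq'⟩ :=
              hhigh (n - 1 - (k+1)) (k+1) (by omega) rfl _ (by simp only; omega)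
            rw [hDqM]
            exact ih (b - q) (by omega) q b hq' hb' rfl (by omega) hb (by omega)
          have hda2 : ((b : ℤ) - a + 1) ≤ f (k+1) ⟨a, by omega⟩ := by
            rw [hDa]; omega
          have hecc := eCC (f (k+1)) a b hab' hb hn2 hstep'.1 hda2 hDq
          apply hstep'.2.2.2
          refine ⟨fun q => if q.val = a then ((b : ℤ) - a) else f (k+1) q, hecc, ?_, ?_, ?_, ?_⟩
          · intro q
            by_cases hq : q.val = a
            · simp only [if_pos hq]
              have : q = ⟨a, ha⟩ := Fin.ext hq
              rw [this, hfka]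
              omega
            · simp only [if_neg hq]
              rw [hstep'.2.1 q (by intro hE; exact hq (by rw [hE]))]
          · intro q
            by_cases hq : q.val = a
            · simp only [if_pos hq]
              have : q = ⟨a, ha⟩ := Fin.ext hq
              rw [this, hDa]
              omega
            · simp only [if_neg hq]; exact le_rfl
          · intro hEq4
            have h9 := congrFun hEq4 ⟨a, ha⟩
            simp at h9
            omega
          · intro hEq4
            have h9 := congrFun hEq4 ⟨a, ha⟩
            simp at h9
            omega
  -- Assembly
  have hMcc : IsCC n cM := by
    have := hCCk (n-1) le_rfl
    rwa [hfN] at this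
  refine ⟨?_, ?_, ?_⟩
  · intro i
    exact ⟨(key1 i).2, fun h0 => lt_of_le_of_lt h0 (key1 i).1⟩
  · intro i
    split_ifs with hi
    · omega
    · push_neg at hi
      have := lt_of_le_of_lt hi (key1 i).1
      omega
  · set G : Fin (n-1) → ℤ := fun i => if cm i < 0 then cm i else cM i with hG
    have hU : ccU n G = ccU n cM := by
      funext i
      by_cases h : i.val < n - 1
      · rw [ccU_pos _ _ h, ccU_pos _ _ h, hG]
        simp only
        split_ifs with h'
        · have := (key1 ⟨i.val, h⟩).2 h'
          omega
        · rfl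
      · rw [ccU_last _ _ h, ccU_last _ _ h]
    have hV : ccV n G = ccV n cm := by
      funext i
      by_cases h : 0 < i.val
      · rw [ccV_pos _ _ h, ccV_pos _ _ h, hG]
        simp only
        split_ifs with h'
        · rfl
        · push_neg at h'
          have := lt_of_le_of_lt h' (key1 _).1
          omega
      · rw [ccV_zero _ _ h, ccV_zero _ _ h]
    rw [IsCC, hU, hV]
    refine ⟨hMcc.1, hcc.2.1, ?_⟩
    intro i j hij hle
    have hij' := Fin.lt_def.mp hij
    by_cases hi : i.val < n - 1
    · have hj0 : 0 < j.val := by omega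
      have hb' : j.val - 1 < n - 1 := by have := j.isLt; omega
      rw [ccU_pos _ _ hi] at hle
      rw [ccV_pos _ _ hj0]
      by_contra hcontra
      push_neg at hcontra
      have hhyp : (j.val - 1) - i.val + 1 ≤ (-(cm ⟨j.val - 1, hb'⟩)).toNat := by
        have h5 : (-(cm ⟨j.val - 1, by have := j.isLt; omega⟩)).toNat
            = (-(cm ⟨j.val - 1, hb'⟩)).toNat := rfl
        rw [h5] at hcontra
        omega
      have h6 := keyL ((j.val - 1) - i.val) i.val (j.val - 1) hi hb' rfl (by omega)
        (by omega) hhyp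
      have h5 : (-(cm ⟨j.val - 1, by have := j.isLt; omega⟩)).toNat
          = (-(cm ⟨j.val - 1, hb'⟩)).toNat := rfl
      rw [h5] at hcontra
      omega
    · rw [ccU_last _ _ hi] at hle
      omega
end

section
/- If c is a synchronized cubic coordinate of size n ≥ 3, then c is external: there exists a sign vector ε ∈ {-1,1}^{n-1} such that the open region {x ∈ ℝ^{n-1} : x_i < c_i if ε_i = -1, x_i > c_i if ε_i = 1} contains no cubic coordinate. -/
lemma ccU_mk (n : ℕ) (d : Fin (n - 1) → ℤ) (k : ℕ) (hk : k < n - 1) (hk2 : k < n) :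
    ccU n d ⟨k, hk2⟩ = (d ⟨k, hk⟩).toNat := by
  simp only [ccU]
  exact dif_pos hk

/-- A synchronized cubic coordinate of size `n ≥ 3` is external: some open orthant region
around it contains no cubic coordinate. -/
theorem stmt18 {n : ℕ} (hn : 3 ≤ n) (c : Fin (n - 1) → ℤ) (hc : IsCC n c)
    (hs : ∀ i, c i ≠ 0) :
    ∃ ε : Fin (n - 1) → ℤ, (∀ i, ε i = -1 ∨ ε i = 1) ∧
      ¬ ∃ d : Fin (n - 1) → ℤ, IsCC n d ∧
        ∀ i, (ε i = -1 → d i < c i) ∧ (ε i = 1 → c i < d i) := by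
  refine ⟨fun i => if 0 < c i then 1 else -1, fun i => by by_cases h : 0 < c i <;> simp [h], ?_⟩
  rintro ⟨d, ⟨⟨hU1, _⟩, ⟨hV1, _⟩, hcomp⟩, hdc⟩
  have key : ∀ i : Fin (n - 1), 2 ≤ d i ∨ d i ≤ -2 := by
    intro i
    have h := hdc i
    rcases lt_trichotomy (c i) 0 with h1 | h1 | h1
    · right
      have := h.1 (by simp [if_neg (not_lt.mpr h1.le)])
      omega
    · exact absurd h1 (hs i)
    · left
      have := h.2 (by simp [if_pos h1])
      omega
  have main : ∀ k, (hk : k < n - 1) → 2 ≤ d ⟨k, hk⟩ := by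
    intro k
    induction k with
    | zero =>
      intro hk
      rcases key ⟨0, hk⟩ with h | h
      · exact h
      · exfalso
        have hn1 : (1 : ℕ) < n := by omega
        have hv : (-(d ⟨0, hk⟩)).toNat ≤ (1 : ℕ) := hV1 ⟨1, hn1⟩
        omega
    | succ k ih =>
      intro hk
      have hk' : k < n - 1 := by omega
      have ihk := ih hk'
      rcases key ⟨k + 1, hk⟩ with h | h
      · exact h
      · exfalso
        have hkn : k < n := by omega
        have hk2n : k + 2 < n := by omega
        have hu : (k + 2 : ℕ) - k ≤ ccU n d ⟨k, hkn⟩ := by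
          rw [ccU_mk n d k hk' hkn]
          omega
        have hcmp := hcomp ⟨k, hkn⟩ ⟨k + 2, hk2n⟩ (Fin.mk_lt_mk.mpr (by omega)) hu
        have hv : (-(d ⟨k + 1, hk⟩)).toNat < k + 2 - k := hcmp
        omega
  have h' : n - 2 < n - 1 := by omega
  have hn2n : n - 2 < n := by omega
  have hlast := main (n - 2) h'
  have hub : (d ⟨n - 2, h'⟩).toNat ≤ n - (n - 2 + 1) := by
    rw [← ccU_mk n d (n - 2) h' hn2n]
    exact hU1 ⟨n - 2, hn2n⟩
  omega
end
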